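/- If OSD_X and OSD_Y are nonnegative reals and there exist functions Sep_X, Sep_Y, Span_X, Span_Y with Span ≤ Sep ≤ Span(·/2) (in the ν-argument) for each space, the limits lim_{ν→0} log Sep_X(ν)/(−log ν) = OSD_X and lim_{ν→0} log Sep_Y(ν)/(−log ν) = OSD_Y exist, and the product space satisfies Sep_{X×Y}(ν) ≥ Sep_X(ν)·Sep_Y(ν) and Span_{X×Y}(ν) ≤ Span_X(ν/2)·Span_Y(ν/2), then lim_{ν→0} log Sep_{X×Y}(ν)/(−log ν) exists and equals OSD_X + OSD_Y. -/

import Mathlib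

/-!
Write `Sep ≈ ν^{-d}` for `log Sep ν / (-log ν) → d`. The product bound gives
`Sep_X(ν) Sep_Y(ν) ≤ Sep_{X×Y}(ν)`, and the comparison with spanning numbers gives
`Sep_{X×Y}(ν) ≤ Span_{X×Y}(ν/2) ≤ Span_X(ν/4) Span_Y(ν/4) ≤ Sep_X(ν/4) Sep_Y(ν/4)`.
Both bounds have exponent `OSD_X + OSD_Y`, since the exponent is additive under products and
insensitive to rescaling `ν ↦ cν` (because `-log (cν) / -log ν → 1`), so the squeeze theorem
applies.
-/

open Filter Topology Real

lemma tendsto_neg_log_nhdsGT_zero : Tendsto (fun ν : ℝ => -log ν) (𝓝[>] 0) atTop :=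
  tendsto_neg_atBot_atTop.comp tendsto_log_nhdsGT_zero

lemma tendsto_const_mul_nhdsGT_zero {c : ℝ} (hc : 0 < c) :
    Tendsto (c * ·) (𝓝[>] (0 : ℝ)) (𝓝[>] 0) := by
  simpa only [comap_mulLeft_nhdsGT_zero hc] using tendsto_comap (f := (c * ·)) (x := 𝓝[>] (0 : ℝ))

lemma tendsto_neg_log_const_mul_div_neg_log {c : ℝ} (hc : 0 < c) :
    Tendsto (fun ν => -log (c * ν) / -log ν) (𝓝[>] 0) (𝓝 1) := by
  have hlim : Tendsto (fun ν => 1 - log c / -log ν) (𝓝[>] 0) (𝓝 (1 - 0)) :=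
    tendsto_const_nhds.sub (tendsto_const_nhds.div_atTop tendsto_neg_log_nhdsGT_zero)
  rw [sub_zero] at hlim
  refine hlim.congr' ?_
  filter_upwards [self_mem_nhdsWithin, tendsto_neg_log_nhdsGT_zero.eventually_ne_atTop 0]
    with ν (hν : 0 < ν) hlog
  have hlog' : log ν ≠ 0 := neg_ne_zero.mp hlog
  rw [log_mul hc.ne' hν.ne']
  field_simp
  ring

/-- The orbit separation dimension is the scaling exponent of the separation numbers. -/
def HasScalingExponent (f : ℝ → ℝ) (d : ℝ) : Prop :=
  Tendsto (fun ν => log (f ν) / -log ν) (𝓝[>] 0) (𝓝 d)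

namespace HasScalingExponent

variable {f g h : ℝ → ℝ} {d e : ℝ}

theorem comp_const_mul (hf : HasScalingExponent f d) {c : ℝ} (hc : 0 < c) :
    HasScalingExponent (fun ν => f (c * ν)) d := by
  have hlim := (hf.comp (tendsto_const_mul_nhdsGT_zero hc)).mul
    (tendsto_neg_log_const_mul_div_neg_log hc)
  rw [mul_one] at hlim
  refine hlim.congr' ?_
  filter_upwards [(tendsto_neg_log_nhdsGT_zero.comp
    (tendsto_const_mul_nhdsGT_zero hc)).eventually_ne_atTop 0] with ν hν
  exact div_mul_div_cancel₀ hν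

theorem mul (hf : HasScalingExponent f d) (hg : HasScalingExponent g e)
    (hf0 : ∀ᶠ ν in 𝓝[>] 0, f ν ≠ 0) (hg0 : ∀ᶠ ν in 𝓝[>] 0, g ν ≠ 0) :
    HasScalingExponent (fun ν => f ν * g ν) (d + e) := by
  refine (hf.add hg).congr' ?_
  filter_upwards [hf0, hg0] with ν hfν hgν
  rw [log_mul hfν hgν, add_div]

theorem of_le_of_le (hf : HasScalingExponent f d) (hg : HasScalingExponent g d)
    (hf0 : ∀ᶠ ν in 𝓝[>] 0, 0 < f ν) (hfh : ∀ᶠ ν in 𝓝[>] 0, f ν ≤ h ν)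
    (hhg : ∀ᶠ ν in 𝓝[>] 0, h ν ≤ g ν) : HasScalingExponent h d := by
  have hlog : ∀ᶠ ν in 𝓝[>] (0 : ℝ), 0 < -log ν :=
    tendsto_neg_log_nhdsGT_zero.eventually_gt_atTop 0
  refine tendsto_of_tendsto_of_tendsto_of_le_of_le' hf hg ?_ ?_
  · filter_upwards [hlog, hf0, hfh] with ν hlogν hfν hfhν
    exact div_le_div_of_nonneg_right (log_le_log hfν hfhν) hlogν.le
  · filter_upwards [hlog, hf0, hfh, hhg] with ν hlogν hfν hfhν hhgν
    exact div_le_div_of_nonneg_right (log_le_log (hfν.trans_le hfhν) hhgν) hlogν.le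

end HasScalingExponent

theorem stmt17_general (SepX SpanX SepY SpanY SepXY SpanXY : ℝ → ℝ)
    (OSDX OSDY : ℝ)
    (hpos : ∀ ν : ℝ, 0 < ν →
      1 ≤ SpanX ν ∧ 1 ≤ SepX ν ∧ 1 ≤ SpanY ν ∧ 1 ≤ SepY ν ∧
        1 ≤ SpanXY ν ∧ 1 ≤ SepXY ν)
    (hssX : ∀ ν : ℝ, 0 < ν → SpanX ν ≤ SepX ν ∧ SepX ν ≤ SpanX (ν / 2))
    (hssY : ∀ ν : ℝ, 0 < ν → SpanY ν ≤ SepY ν ∧ SepY ν ≤ SpanY (ν / 2))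
    (hssXY : ∀ ν : ℝ, 0 < ν → SpanXY ν ≤ SepXY ν ∧ SepXY ν ≤ SpanXY (ν / 2))
    (hlimX : Tendsto (fun ν : ℝ => Real.log (SepX ν) / (-Real.log ν))
      (nhdsWithin 0 (Set.Ioi 0)) (nhds OSDX))
    (hlimY : Tendsto (fun ν : ℝ => Real.log (SepY ν) / (-Real.log ν))
      (nhdsWithin 0 (Set.Ioi 0)) (nhds OSDY))
    (hprod1 : ∀ ν : ℝ, 0 < ν → SepX ν * SepY ν ≤ SepXY ν)
    (hprod2 : ∀ ν : ℝ, 0 < ν → SpanXY ν ≤ SpanX (ν / 2) * SpanY (ν / 2)) :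
    Tendsto (fun ν : ℝ => Real.log (SepXY ν) / (-Real.log ν))
      (nhdsWithin 0 (Set.Ioi 0)) (nhds (OSDX + OSDY)) := by
  have hX : HasScalingExponent SepX OSDX := hlimX
  have hY : HasScalingExponent SepY OSDY := hlimY
  have hSep_pos (ν : ℝ) (hν : 0 < ν) : 0 < SepX ν ∧ 0 < SepY ν :=
    ⟨zero_lt_one.trans_le (hpos ν hν).2.1, zero_lt_one.trans_le (hpos ν hν).2.2.2.1⟩
  have hSepXY_le (ν : ℝ) (hν : 0 < ν) : SepXY ν ≤ SepX (4⁻¹ * ν) * SepY (4⁻¹ * ν) := by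
    have hν4 : 0 < 4⁻¹ * ν := by positivity
    calc SepXY ν ≤ SpanXY (ν / 2) := (hssXY ν hν).2
      _ ≤ SpanX (ν / 2 / 2) * SpanY (ν / 2 / 2) := hprod2 _ (half_pos hν)
      _ = SpanX (4⁻¹ * ν) * SpanY (4⁻¹ * ν) := by rw [show ν / 2 / 2 = 4⁻¹ * ν by ring]
      _ ≤ SepX (4⁻¹ * ν) * SepY (4⁻¹ * ν) :=
        mul_le_mul (hssX _ hν4).1 (hssY _ hν4).1 (zero_le_one.trans (hpos _ hν4).2.2.1)
          (hSep_pos _ hν4).1.le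
  have hlower : HasScalingExponent (fun ν => SepX ν * SepY ν) (OSDX + OSDY) :=
    hX.mul hY (eventually_nhdsWithin_of_forall fun ν hν => (hSep_pos ν hν).1.ne')
      (eventually_nhdsWithin_of_forall fun ν hν => (hSep_pos ν hν).2.ne')
  have hupper : HasScalingExponent (fun ν => SepX (4⁻¹ * ν) * SepY (4⁻¹ * ν)) (OSDX + OSDY) :=
    (hX.comp_const_mul (by norm_num)).mul (hY.comp_const_mul (by norm_num))
      (eventually_nhdsWithin_of_forall fun ν hν => (hSep_pos _ (mul_pos (by norm_num) hν)).1.ne')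
      (eventually_nhdsWithin_of_forall fun ν hν => (hSep_pos _ (mul_pos (by norm_num) hν)).2.ne')
  exact hlower.of_le_of_le hupper
    (eventually_nhdsWithin_of_forall fun ν hν => mul_pos (hSep_pos ν hν).1 (hSep_pos ν hν).2)
    (eventually_nhdsWithin_of_forall hprod1) (eventually_nhdsWithin_of_forall hSepXY_le)

/-- Abstract product formula for the orbit separation dimension: if the
separation/spanning numbers of `X` and `Y` satisfy `Span ≤ Sep ≤ Span(·/2)`,
the limits defining `OSD_X` and `OSD_Y` exist, and the product system satisfies
`Sep_{X×Y}(ν) ≥ Sep_X(ν)·Sep_Y(ν)` and `Span_{X×Y}(ν) ≤ Span_X(ν/2)·Span_Y(ν/2)`,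
then the limit for the product exists and equals `OSD_X + OSD_Y`. -/
theorem stmt17 (SepX SpanX SepY SpanY SepXY SpanXY : ℝ → ℝ)
    (OSDX OSDY : ℝ) (hX0 : 0 ≤ OSDX) (hY0 : 0 ≤ OSDY)
    (hpos : ∀ ν : ℝ, 0 < ν →
      1 ≤ SpanX ν ∧ 1 ≤ SepX ν ∧ 1 ≤ SpanY ν ∧ 1 ≤ SepY ν ∧
        1 ≤ SpanXY ν ∧ 1 ≤ SepXY ν)
    (hmono : ∀ ν₁ ν₂ : ℝ, 0 < ν₁ → ν₁ ≤ ν₂ →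
      SepX ν₂ ≤ SepX ν₁ ∧ SepY ν₂ ≤ SepY ν₁ ∧ SepXY ν₂ ≤ SepXY ν₁ ∧
        SpanX ν₂ ≤ SpanX ν₁ ∧ SpanY ν₂ ≤ SpanY ν₁ ∧ SpanXY ν₂ ≤ SpanXY ν₁)
    (hssX : ∀ ν : ℝ, 0 < ν → SpanX ν ≤ SepX ν ∧ SepX ν ≤ SpanX (ν / 2))
    (hssY : ∀ ν : ℝ, 0 < ν → SpanY ν ≤ SepY ν ∧ SepY ν ≤ SpanY (ν / 2))
    (hssXY : ∀ ν : ℝ, 0 < ν → SpanXY ν ≤ SepXY ν ∧ SepXY ν ≤ SpanXY (ν / 2))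
    (hlimX : Tendsto (fun ν : ℝ => Real.log (SepX ν) / (-Real.log ν))
      (nhdsWithin 0 (Set.Ioi 0)) (nhds OSDX))
    (hlimY : Tendsto (fun ν : ℝ => Real.log (SepY ν) / (-Real.log ν))
      (nhdsWithin 0 (Set.Ioi 0)) (nhds OSDY))
    (hprod1 : ∀ ν : ℝ, 0 < ν → SepX ν * SepY ν ≤ SepXY ν)
    (hprod2 : ∀ ν : ℝ, 0 < ν → SpanXY ν ≤ SpanX (ν / 2) * SpanY (ν / 2)) :
    Tendsto (fun ν : ℝ => Real.log (SepXY ν) / (-Real.log ν))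
      (nhdsWithin 0 (Set.Ioi 0)) (nhds (OSDX + OSDY)) :=
  stmt17_general SepX SpanX SepY SpanY SepXY SpanXY OSDX OSDY hpos hssX hssY hssXY hlimX hlimY
    hprod1 hprod2
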